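/- Under the hypotheses of the previous statement, the number of pairs (n₁, n₂) with N/2 < n₁ < n₂ ≤ 2N for which some integer m ∈ (M, 2M] satisfies x < m·n₁, m·n₂ ≤ x+y is at most C·x·y/M² for an absolute constant C, provided M·N ≍ x (say x/2 ≤ M·N ≤ 2x). -/

import Mathlib

/-!
If `x < m·n₁` and `m·n₂ ≤ x + y` with `m > M`, then `n₂ - n₁ < y/M`. A pair is therefore
determined by `n₁ ≤ 2N` and a gap `n₂ - n₁ ≤ y/M`, so there are at most
`2N · y/M ≤ 4xy/M²` of them, using `M·N ≤ 2x`.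
-/

lemma sub_lt_div_of_lt_mul_of_mul_le {x y M m a b : ℝ} (hM : 0 < M) (hm : M < m)
    (hab : a ≤ b) (ha : x < m * a) (hb : m * b ≤ x + y) : b - a < y / M := by
  rw [lt_div_iff₀ hM]
  nlinarith

lemma Set.ncard_le_mul_of_fst_mem_Icc_of_gap_mem_Icc (a d : ℕ) {S : Set (ℕ × ℕ)}
    (hS : ∀ p ∈ S, p.1 ∈ Finset.Icc 1 a ∧ p.2 - p.1 ∈ Finset.Icc 1 d) :
    S.ncard ≤ a * d := by
  have hinj : Set.InjOn (fun p : ℕ × ℕ => (p.1, p.2 - p.1)) S := by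
    rintro ⟨p₁, p₂⟩ hp ⟨q₁, q₂⟩ hq h
    have hp' := Finset.mem_Icc.1 (hS _ hp).2
    have hq' := Finset.mem_Icc.1 (hS _ hq).2
    simp only [Prod.mk.injEq] at h hp' hq' ⊢
    omega
  have hmaps : Set.MapsTo (fun p : ℕ × ℕ => (p.1, p.2 - p.1)) S
      ↑(Finset.Icc 1 a ×ˢ Finset.Icc 1 d) := fun p hp =>
    Finset.mem_coe.2 (Finset.mem_product.2 (hS p hp))
  calc S.ncard ≤ (↑(Finset.Icc 1 a ×ˢ Finset.Icc 1 d) : Set (ℕ × ℕ)).ncard :=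
        Set.ncard_le_ncard_of_injOn _ hmaps hinj (Finset.finite_toSet _)
    _ = a * d := by rw [Set.ncard_coe_finset, Finset.card_product]; simp

/-- The number of pairs `(n₁, n₂)` with `N/2 < n₁ < n₂ ≤ 2N` for which some integer
`m ∈ (M, 2M]` satisfies `x < m·n₁, m·n₂ ≤ x+y` is at most `C·x·y/M²` for an absolute
constant `C`, provided `x/2 ≤ M·N ≤ 2x`, `0 < y ≤ x` and `2x ≤ y·N`. -/
theorem stmt13 :
    ∃ C > (0 : ℝ), ∀ x y M N : ℝ, 0 < y → y ≤ x → 0 < M → 0 < N →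
      x / 2 ≤ M * N → M * N ≤ 2 * x → 2 * x ≤ y * N →
      (({p : ℕ × ℕ | N / 2 < (p.1 : ℝ) ∧ p.1 < p.2 ∧ (p.2 : ℝ) ≤ 2 * N ∧
          ∃ m : ℕ, M < (m : ℝ) ∧ (m : ℝ) ≤ 2 * M ∧
            x < (m : ℝ) * p.1 ∧ (m : ℝ) * p.1 ≤ x + y ∧
            x < (m : ℝ) * p.2 ∧ (m : ℝ) * p.2 ≤ x + y}.ncard : ℝ)) ≤
        C * x * y / M ^ 2 := by
  refine ⟨4, by norm_num, fun x y M N hy _ hM hN _ hMN _ => ?_⟩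
  refine (Nat.cast_le.2 (Set.ncard_le_mul_of_fst_mem_Icc_of_gap_mem_Icc ⌊2 * N⌋₊ ⌊y / M⌋₊ ?_)).trans ?_
  · rintro ⟨n₁, n₂⟩ ⟨hn₁, hlt, hn₂, m, hMm, -, hx₁, -, -, hx₂⟩
    have hgap := sub_lt_div_of_lt_mul_of_mul_le hM hMm (Nat.cast_le.2 hlt.le) hx₁ hx₂
    have hn₁pos : 0 < n₁ := by exact_mod_cast (by positivity : (0 : ℝ) < N / 2).trans hn₁
    refine ⟨Finset.mem_Icc.2 ⟨hn₁pos, Nat.le_floor ?_⟩, Finset.mem_Icc.2 ⟨by omega, Nat.le_floor ?_⟩⟩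
    · exact (Nat.cast_le.2 hlt.le).trans hn₂
    · rw [Nat.cast_sub hlt.le]; exact hgap.le
  · calc ((⌊2 * N⌋₊ * ⌊y / M⌋₊ : ℕ) : ℝ) = (⌊2 * N⌋₊ : ℝ) * ⌊y / M⌋₊ := Nat.cast_mul _ _
      _ ≤ 2 * N * (y / M) := by gcongr <;> exact Nat.floor_le (by positivity)
      _ = M * N * (2 * y) / M ^ 2 := by field_simp
      _ ≤ 2 * x * (2 * y) / M ^ 2 := by gcongr
      _ = 4 * x * y / M ^ 2 := by ring
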